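/- arXiv:1403.6062 — 2 statements merged into one kernel-verified Lean document; each statement's English description precedes it below -/
import Mathlib

section
/- Let r ≥ 3, let E be a homogeneous r-th order linear ODE on an open interval I, and let T, X₁, X₀ : I → ℝ be smooth with T'(t)X₁(t) ≠ 0 for all t ∈ I. Then the following are equivalent: (i) there exists a homogeneous r-th order linear ODE Ẽ on T(I) such that the fiber-preserving transformation t̃ = T(t), x̃ = X₁(t)x + X₀(t) maps E to Ẽ and its inverse maps Ẽ to E (i.e., for every solution y of Ẽ the function t ↦ (y(T(t)) − X₀(t))/X₁(t) is a solution of E); (ii) X₀/X₁ is a solution of E. -/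
open Set

/-- The left-hand side `x^(r)(t) + ∑_{i<r} aᵢ(t) x^(i)(t)` of an `r`-th order linear ODE. -/
noncomputable def odeLHS (r : ℕ) (a : ℕ → ℝ → ℝ) (x : ℝ → ℝ) (t : ℝ) : ℝ :=
  iteratedDeriv r x t + ∑ i ∈ Finset.range r, a i t * iteratedDeriv i x t

/-- `x` is a solution on `I` of the linear ODE `x^(r) + ∑_{i<r} aᵢ x^(i) = b`:
it is smooth on `I` and satisfies the identity on `I`. -/
def IsSolODE (r : ℕ) (a : ℕ → ℝ → ℝ) (b : ℝ → ℝ) (I : Set ℝ) (x : ℝ → ℝ) : Prop :=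
  ContDiffOn ℝ (⊤ : ℕ∞) x I ∧ ∀ t ∈ I, odeLHS r a x t = b t

/-- `I ⊆ ℝ` is a (nonempty) open interval. -/
def IsOpenInterval (I : Set ℝ) : Prop := IsOpen I ∧ I.OrdConnected ∧ I.Nonempty

/-- The fiber-preserving transformation `t̃ = T(t)`, `x̃ = X₁(t)x + X₀(t)` maps the
`r`-th order linear ODE with coefficients `a`, `b` on `I` to the one with coefficients
`a'`, `b'` on `T(I)`: for every solution `x` of the source equation the function
`y(s) = X₁(T⁻¹(s))x(T⁻¹(s)) + X₀(T⁻¹(s))` is a solution of the target equation. -/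
def FPMapsODE (r : ℕ) (I : Set ℝ) (a : ℕ → ℝ → ℝ) (b : ℝ → ℝ)
    (a' : ℕ → ℝ → ℝ) (b' : ℝ → ℝ) (T X₁ X₀ : ℝ → ℝ) : Prop :=
  ∀ x : ℝ → ℝ, IsSolODE r a b I x →
    ∃ y : ℝ → ℝ, IsSolODE r a' b' (T '' I) y ∧ ∀ t ∈ I, y (T t) = X₁ t * x t + X₀ t

/-!
If `v t = X t * y (T t)` (here `X = 1 / X₁`), the chain and Leibniz rules write each
`v⁽ʲ⁾(t)` as a combination of `y⁽ᵏ⁾(T t)`, `k ≤ j`, with smooth coefficients and leading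
coefficient `X t * T'(t) ^ j`. Substituting into `E` and dividing by the (nonvanishing) leading
coefficient gives a homogeneous linear equation `Ẽ` on `T(I)` that `y` solves exactly when `v`
solves `E`. As `X₁ x + X₀ = X₁ (x + X₀ / X₁)`, the transformation and its inverse then match the
solutions of `E` and `Ẽ` once `X₀ / X₁` solves `E`. Conversely, the zero solution of `Ẽ` is
pulled back to `-X₀ / X₁`.
-/

open Filter Topology

theorem Set.InjOn.of_deriv_ne_zero {f : ℝ → ℝ} {s : Set ℝ} (hs : IsOpen s) (hc : s.OrdConnected)
    (hf : DifferentiableOn ℝ f s) (hf' : ∀ x ∈ s, deriv f x ≠ 0) : InjOn f s := by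
  have hderiv : ∀ x ∈ s, HasDerivWithinAt f (deriv f x) s x := fun x hx =>
    (hf.differentiableAt (hs.mem_nhds hx)).hasDerivAt.hasDerivWithinAt
  rcases hasDerivWithinAt_forall_lt_or_forall_gt_of_forall_ne hc.convex hderiv hf' with hneg | hpos
  · exact (strictAntiOn_of_deriv_neg hc.convex hf.continuousOn
      (by rwa [hs.interior_eq])).injOn
  · exact (strictMonoOn_of_deriv_pos hc.convex hf.continuousOn
      (by rwa [hs.interior_eq])).injOn

theorem isOpen_image_of_deriv_ne_zero {f : ℝ → ℝ} {s : Set ℝ} (hs : IsOpen s) {n : WithTop ℕ∞}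
    (hf : ContDiffOn ℝ n f s) (hn : n ≠ 0) (hf' : ∀ x ∈ s, deriv f x ≠ 0) : IsOpen (f '' s) := by
  rw [isOpen_iff_mem_nhds]
  rintro _ ⟨x, hx, rfl⟩
  have hstrict : HasStrictDerivAt f (deriv f x) x :=
    ((hf x hx).contDiffAt (hs.mem_nhds hx)).hasStrictDerivAt hn
  rw [← hstrict.map_nhds_eq (hf' x hx)]
  exact image_mem_map (hs.mem_nhds hx)

/-- Near `f a`, the inverse of `f` on `s` is the local inverse given by the inverse function
theorem. -/
theorem ContDiffAt.invFunOn {f : ℝ → ℝ} {s : Set ℝ} {a : ℝ} {n : WithTop ℕ∞} (hs : IsOpen s)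
    (hinj : InjOn f s) (ha : a ∈ s) (hf : ContDiffAt ℝ n f a) (hf' : deriv f a ≠ 0)
    (hn : n ≠ 0) : ContDiffAt ℝ n (Function.invFunOn f s) (f a) := by
  have hderiv : HasFDerivAt f
      ((ContinuousLinearEquiv.unitsEquivAut ℝ (Units.mk0 (deriv f a) hf')) : ℝ →L[ℝ] ℝ) a :=
    (hf.differentiableAt hn).hasDerivAt.hasFDerivAt_equiv hf'
  set g := hf.localInverse hderiv hn
  have hga : g (f a) = a := hf.localInverse_apply_image hderiv hn
  have hright : ∀ᶠ y in 𝓝 (f a), f (g y) = y :=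
    (hf.hasStrictFDerivAt' hderiv hn).eventually_right_inverse
  have hmem : ∀ᶠ y in 𝓝 (f a), g y ∈ s :=
    (hf.hasStrictFDerivAt' hderiv hn).localInverse_continuousAt.eventually_mem
      (show s ∈ 𝓝 (g (f a)) by rw [hga]; exact hs.mem_nhds ha)
  refine (hf.to_localInverse hderiv hn).congr_of_eventuallyEq ?_
  filter_upwards [hright, hmem] with y hy hys
  have hy' : ∃ x ∈ s, f x = y := ⟨g y, hys, hy⟩
  exact hinj (Function.invFunOn_mem hy') hys (by rw [Function.invFunOn_eq hy', hy])

theorem ContDiffOn.invFunOn_image {f : ℝ → ℝ} {s : Set ℝ} {n : WithTop ℕ∞} (hs : IsOpen s)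
    (hinj : InjOn f s) (hf : ContDiffOn ℝ n f s) (hf' : ∀ x ∈ s, deriv f x ≠ 0) (hn : n ≠ 0) :
    ContDiffOn ℝ n (Function.invFunOn f s) (f '' s) := by
  rintro _ ⟨x, hx, rfl⟩
  exact ((hf x hx).contDiffAt (hs.mem_nhds hx)).invFunOn hs hinj hx (hf' x hx) hn
    |>.contDiffWithinAt

/-- `chainCoeff X T j k` is the coefficient of `y⁽ᵏ⁾ ∘ T` in the `j`-th derivative of
`X * (y ∘ T)`. -/
noncomputable def chainCoeff (X T : ℝ → ℝ) : ℕ → ℕ → ℝ → ℝ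
  | 0, 0 => X
  | 0, _ + 1 => 0
  | j + 1, 0 => deriv (chainCoeff X T j 0)
  | j + 1, k + 1 => deriv (chainCoeff X T j (k + 1)) + chainCoeff X T j k * deriv T

section chainCoeff

variable {X T : ℝ → ℝ}

theorem chainCoeff_of_lt {j k : ℕ} (h : j < k) : chainCoeff X T j k = 0 := by
  induction j generalizing k with
  | zero => obtain ⟨k, rfl⟩ := Nat.exists_eq_add_of_lt h; rfl
  | succ j ih =>
    obtain ⟨k, rfl⟩ := Nat.exists_eq_add_of_le' (Nat.one_le_of_lt h)
    rw [chainCoeff, ih (by omega), ih (by omega)]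
    simp

theorem chainCoeff_self (j : ℕ) : chainCoeff X T j j = X * deriv T ^ j := by
  induction j with
  | zero => simp [chainCoeff]
  | succ j ih =>
    rw [chainCoeff, ih, chainCoeff_of_lt (Nat.lt_succ_self j)]
    simp [pow_succ, mul_assoc]

theorem ContDiffOn.chainCoeff {I : Set ℝ} (hI : IsOpen I) (hX : ContDiffOn ℝ (⊤ : ℕ∞) X I)
    (hT : ContDiffOn ℝ (⊤ : ℕ∞) T I) (j k : ℕ) :
    ContDiffOn ℝ (⊤ : ℕ∞) (chainCoeff X T j k) I := by
  have hderiv {f : ℝ → ℝ} (hf : ContDiffOn ℝ (⊤ : ℕ∞) f I) : ContDiffOn ℝ (⊤ : ℕ∞) (deriv f) I :=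
    hf.deriv_of_isOpen hI (by exact_mod_cast le_top)
  induction j generalizing k with
  | zero =>
    cases k with
    | zero => exact hX
    | succ k => exact contDiffOn_const
  | succ j ih =>
    cases k with
    | zero => exact hderiv (ih 0)
    | succ k => exact (hderiv (ih (k + 1))).add ((ih k).mul (hderiv hT))

end chainCoeff

theorem ContDiffOn.iteratedDeriv_of_isOpen {f : ℝ → ℝ} {s : Set ℝ} (hf : ContDiffOn ℝ (⊤ : ℕ∞) f s)
    (hs : IsOpen s) (k : ℕ) : ContDiffOn ℝ (⊤ : ℕ∞) (iteratedDeriv k f) s := by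
  induction k with
  | zero => simpa using hf
  | succ k ih => rw [iteratedDeriv_succ]; exact ih.deriv_of_isOpen hs (by exact_mod_cast le_top)

section chainRule

variable {X T y : ℝ → ℝ} {I W : Set ℝ}

theorem hasDerivAt_chainCoeff_mul_iteratedDeriv_comp (hI : IsOpen I) (hW : IsOpen W)
    (hTW : MapsTo T I W) (hX : ContDiffOn ℝ (⊤ : ℕ∞) X I) (hT : ContDiffOn ℝ (⊤ : ℕ∞) T I)
    (hy : ContDiffOn ℝ (⊤ : ℕ∞) y W) (j k : ℕ) {t : ℝ} (ht : t ∈ I) :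
    HasDerivAt (fun u => chainCoeff X T j k u * iteratedDeriv k y (T u))
      (deriv (chainCoeff X T j k) t * iteratedDeriv k y (T t)
        + chainCoeff X T j k t * deriv T t * iteratedDeriv (k + 1) y (T t)) t := by
  have hdiff {f : ℝ → ℝ} {s : Set ℝ} (hs : IsOpen s) (hf : ContDiffOn ℝ (⊤ : ℕ∞) f s) {x : ℝ}
      (hx : x ∈ s) : DifferentiableAt ℝ f x :=
    (hf.differentiableOn (by simp)).differentiableAt (hs.mem_nhds hx)
  have hc := (hdiff hI (hX.chainCoeff hI hT j k) ht).hasDerivAt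
  have hyk := (hdiff hW (hy.iteratedDeriv_of_isOpen hW k) (hTW ht)).hasDerivAt.comp t
    (hdiff hI hT ht).hasDerivAt
  rw [← iteratedDeriv_succ] at hyk
  exact (hc.mul hyk).congr_deriv (by rw [Function.comp_apply]; ring)

theorem iteratedDeriv_mul_comp (hI : IsOpen I) (hW : IsOpen W) (hTW : MapsTo T I W)
    (hX : ContDiffOn ℝ (⊤ : ℕ∞) X I) (hT : ContDiffOn ℝ (⊤ : ℕ∞) T I)
    (hy : ContDiffOn ℝ (⊤ : ℕ∞) y W) {j n : ℕ} (hjn : j ≤ n) {t : ℝ} (ht : t ∈ I) :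
    iteratedDeriv j (fun u => X u * y (T u)) t
      = ∑ k ∈ Finset.range (n + 1), chainCoeff X T j k t * iteratedDeriv k y (T t) := by
  induction j generalizing t with
  | zero =>
    rw [Finset.sum_range_succ', Finset.sum_eq_zero fun k _ => by
      rw [chainCoeff_of_lt k.succ_pos, Pi.zero_apply, zero_mul]]
    simp [chainCoeff]
  | succ j ih =>
    have hexp : iteratedDeriv j (fun u => X u * y (T u)) =ᶠ[𝓝 t]
        fun u => ∑ k ∈ Finset.range (n + 1), chainCoeff X T j k u * iteratedDeriv k y (T u) := by
      filter_upwards [hI.mem_nhds ht] with u hu using ih (by omega) hu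
    rw [iteratedDeriv_succ, hexp.deriv_eq, (HasDerivAt.fun_sum fun k _ =>
      hasDerivAt_chainCoeff_mul_iteratedDeriv_comp hI hW hTW hX hT hy j k ht).deriv]
    have hshift : ∑ k ∈ Finset.range (n + 1),
        chainCoeff X T j k t * deriv T t * iteratedDeriv (k + 1) y (T t)
        = ∑ k ∈ Finset.range n,
            chainCoeff X T j k t * deriv T t * iteratedDeriv (k + 1) y (T t) := by
      rw [Finset.sum_range_succ, chainCoeff_of_lt (show j < n by omega)]
      simp
    rw [Finset.sum_add_distrib, hshift, Finset.sum_range_succ' _ n, Finset.sum_range_succ' _ n]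
    simp only [chainCoeff, Pi.add_apply, Pi.mul_apply, add_mul, Finset.sum_add_distrib]
    ring

end chainRule

section linearity

variable {r : ℕ} {a : ℕ → ℝ → ℝ} {I : Set ℝ} {f g : ℝ → ℝ}

theorem odeLHS_congr (hI : IsOpen I) (hfg : EqOn f g I) {t : ℝ} (ht : t ∈ I) :
    odeLHS r a f t = odeLHS r a g t := by
  simp only [odeLHS, hfg.iteratedDeriv_of_isOpen hI _ ht]

theorem odeLHS_fun_add {t : ℝ} (hf : ContDiffAt ℝ (⊤ : ℕ∞) f t) (hg : ContDiffAt ℝ (⊤ : ℕ∞) g t) :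
    odeLHS r a (fun u => f u + g u) t = odeLHS r a f t + odeLHS r a g t := by
  have h (i : ℕ) := iteratedDeriv_fun_add (n := i) (hf.of_le (by exact_mod_cast le_top))
    (hg.of_le (by exact_mod_cast le_top))
  simp only [odeLHS, h, mul_add, Finset.sum_add_distrib]
  ring

theorem odeLHS_fun_sub {t : ℝ} (hf : ContDiffAt ℝ (⊤ : ℕ∞) f t) (hg : ContDiffAt ℝ (⊤ : ℕ∞) g t) :
    odeLHS r a (fun u => f u - g u) t = odeLHS r a f t - odeLHS r a g t := by
  have h (i : ℕ) := iteratedDeriv_fun_sub (n := i) (hf.of_le (by exact_mod_cast le_top))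
    (hg.of_le (by exact_mod_cast le_top))
  simp only [odeLHS, h, mul_sub, Finset.sum_sub_distrib]
  ring

theorem isSolODE_zero : IsSolODE r a (fun _ => 0) I (fun _ => 0) :=
  ⟨contDiffOn_const, fun t _ => by simp [odeLHS]⟩

theorem IsSolODE.add (hI : IsOpen I) (hf : IsSolODE r a (fun _ => 0) I f)
    (hg : IsSolODE r a (fun _ => 0) I g) : IsSolODE r a (fun _ => 0) I (fun u => f u + g u) := by
  refine ⟨hf.1.add hg.1, fun t ht => ?_⟩
  rw [odeLHS_fun_add ((hf.1 t ht).contDiffAt (hI.mem_nhds ht))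
    ((hg.1 t ht).contDiffAt (hI.mem_nhds ht)), hf.2 t ht, hg.2 t ht, add_zero]

theorem IsSolODE.sub (hI : IsOpen I) (hf : IsSolODE r a (fun _ => 0) I f)
    (hg : IsSolODE r a (fun _ => 0) I g) : IsSolODE r a (fun _ => 0) I (fun u => f u - g u) := by
  refine ⟨hf.1.sub hg.1, fun t ht => ?_⟩
  rw [odeLHS_fun_sub ((hf.1 t ht).contDiffAt (hI.mem_nhds ht))
    ((hg.1 t ht).contDiffAt (hI.mem_nhds ht)), hf.2 t ht, hg.2 t ht, sub_zero]

end linearity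

noncomputable def pullbackCoeff (X T : ℝ → ℝ) (r : ℕ) (a : ℕ → ℝ → ℝ) (k : ℕ) (t : ℝ) : ℝ :=
  chainCoeff X T r k t + ∑ i ∈ Finset.range r, a i t * chainCoeff X T i k t

noncomputable def transformedCoeff (X T : ℝ → ℝ) (I : Set ℝ) (r : ℕ) (a : ℕ → ℝ → ℝ) (k : ℕ)
    (s : ℝ) : ℝ :=
  pullbackCoeff X T r a k (Function.invFunOn T I s)
    / pullbackCoeff X T r a r (Function.invFunOn T I s)

section transform

variable {X T y : ℝ → ℝ} {r : ℕ} {a : ℕ → ℝ → ℝ} {I : Set ℝ}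

theorem pullbackCoeff_self (t : ℝ) : pullbackCoeff X T r a r t = X t * deriv T t ^ r := by
  rw [pullbackCoeff, chainCoeff_self, Finset.sum_eq_zero fun i hi => by
    rw [chainCoeff_of_lt (Finset.mem_range.mp hi), Pi.zero_apply, mul_zero], add_zero]
  rfl

theorem pullbackCoeff_self_ne_zero {t : ℝ} (hX' : X t ≠ 0) (hT' : deriv T t ≠ 0) :
    pullbackCoeff X T r a r t ≠ 0 := by
  rw [pullbackCoeff_self]
  exact mul_ne_zero hX' (pow_ne_zero _ hT')

theorem odeLHS_mul_comp {W : Set ℝ} (hI : IsOpen I) (hW : IsOpen W) (hTW : MapsTo T I W)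
    (hX : ContDiffOn ℝ (⊤ : ℕ∞) X I) (hT : ContDiffOn ℝ (⊤ : ℕ∞) T I)
    (hy : ContDiffOn ℝ (⊤ : ℕ∞) y W) {t : ℝ} (ht : t ∈ I) :
    odeLHS r a (fun u => X u * y (T u)) t
      = ∑ k ∈ Finset.range (r + 1), pullbackCoeff X T r a k t * iteratedDeriv k y (T t) := by
  have hexp {i : ℕ} (hi : i ≤ r) := iteratedDeriv_mul_comp hI hW hTW hX hT hy hi ht
  have hlower : ∑ i ∈ Finset.range r, a i t * iteratedDeriv i (fun u => X u * y (T u)) t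
      = ∑ i ∈ Finset.range r, ∑ k ∈ Finset.range (r + 1),
          a i t * (chainCoeff X T i k t * iteratedDeriv k y (T t)) :=
    Finset.sum_congr rfl fun i hi => by rw [hexp (Finset.mem_range.mp hi).le, Finset.mul_sum]
  rw [odeLHS, hexp le_rfl, hlower, Finset.sum_comm, ← Finset.sum_add_distrib]
  simp only [pullbackCoeff, add_mul, Finset.sum_mul, mul_assoc]

theorem ContDiffOn.pullbackCoeff (hI : IsOpen I) (hX : ContDiffOn ℝ (⊤ : ℕ∞) X I)
    (hT : ContDiffOn ℝ (⊤ : ℕ∞) T I) (ha : ∀ i, ContDiffOn ℝ (⊤ : ℕ∞) (a i) I) (k : ℕ) :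
    ContDiffOn ℝ (⊤ : ℕ∞) (pullbackCoeff X T r a k) I :=
  (hX.chainCoeff hI hT r k).add <| .sum fun i _ => (ha i).mul (hX.chainCoeff hI hT i k)

theorem ContDiffOn.transformedCoeff (hI : IsOpen I) (hinj : InjOn T I)
    (hX : ContDiffOn ℝ (⊤ : ℕ∞) X I) (hX' : ∀ t ∈ I, X t ≠ 0)
    (hT : ContDiffOn ℝ (⊤ : ℕ∞) T I) (hT' : ∀ t ∈ I, deriv T t ≠ 0)
    (ha : ∀ i, ContDiffOn ℝ (⊤ : ℕ∞) (a i) I) (k : ℕ) :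
    ContDiffOn ℝ (⊤ : ℕ∞) (transformedCoeff X T I r a k) (T '' I) := by
  have hG := hT.invFunOn_image hI hinj hT' (by simp)
  have hGI : MapsTo (Function.invFunOn T I) (T '' I) I := fun _ hs => Function.invFunOn_mem hs
  refine ((hX.pullbackCoeff hI hT ha k).comp hG hGI).div
    ((hX.pullbackCoeff hI hT ha r).comp hG hGI) fun s hs => ?_
  exact pullbackCoeff_self_ne_zero (hX' _ (hGI hs)) (hT' _ (hGI hs))

theorem odeLHS_transformedCoeff (hinj : InjOn T I) {t : ℝ} (ht : t ∈ I) (hX' : X t ≠ 0)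
    (hT' : deriv T t ≠ 0) :
    odeLHS r (transformedCoeff X T I r a) y (T t) * pullbackCoeff X T r a r t
      = ∑ k ∈ Finset.range (r + 1), pullbackCoeff X T r a k t * iteratedDeriv k y (T t) := by
  have hlead : pullbackCoeff X T r a r t ≠ 0 := pullbackCoeff_self_ne_zero hX' hT'
  simp only [odeLHS, transformedCoeff, hinj.leftInvOn_invFunOn ht, Finset.sum_range_succ _ r,
    add_mul, Finset.sum_mul]
  rw [add_comm]
  congr 1
  · refine Finset.sum_congr rfl fun k _ => ?_
    field_simp
  · ring

theorem isSolODE_transformedCoeff_iff {v : ℝ → ℝ} (hI : IsOpen I) (hinj : InjOn T I)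
    (hX : ContDiffOn ℝ (⊤ : ℕ∞) X I) (hX' : ∀ t ∈ I, X t ≠ 0)
    (hT : ContDiffOn ℝ (⊤ : ℕ∞) T I) (hT' : ∀ t ∈ I, deriv T t ≠ 0)
    (hy : ContDiffOn ℝ (⊤ : ℕ∞) y (T '' I)) (hv : EqOn v (fun u => X u * y (T u)) I) :
    IsSolODE r (transformedCoeff X T I r a) (fun _ => 0) (T '' I) y
      ↔ IsSolODE r a (fun _ => 0) I v := by
  have hW := isOpen_image_of_deriv_ne_zero hI hT (by simp) hT'
  have hv_smooth : ContDiffOn ℝ (⊤ : ℕ∞) v I :=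
    (hX.mul (hy.comp hT (mapsTo_image T I))).congr hv
  simp only [IsSolODE, hy, hv_smooth, true_and, forall_mem_image]
  refine forall₂_congr fun t ht => ?_
  rw [odeLHS_congr hI hv ht, odeLHS_mul_comp hI hW (mapsTo_image T I) hX hT hy ht,
    ← odeLHS_transformedCoeff hinj ht (hX' t ht) (hT' t ht), mul_eq_zero,
    or_iff_left (pullbackCoeff_self_ne_zero (hX' t ht) (hT' t ht))]

theorem IsSolODE.transformed {X₁ v : ℝ → ℝ} (hI : IsOpen I) (hinj : InjOn T I)
    (hX₁ : ContDiffOn ℝ (⊤ : ℕ∞) X₁ I) (hX₁' : ∀ t ∈ I, X₁ t ≠ 0)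
    (hT : ContDiffOn ℝ (⊤ : ℕ∞) T I) (hT' : ∀ t ∈ I, deriv T t ≠ 0)
    (hv : IsSolODE r a (fun _ => 0) I v) :
    IsSolODE r (transformedCoeff (fun t => (X₁ t)⁻¹) T I r a) (fun _ => 0) (T '' I)
      (fun s => X₁ (Function.invFunOn T I s) * v (Function.invFunOn T I s)) := by
  have hG := hT.invFunOn_image hI hinj hT' (by simp)
  have hGI : MapsTo (Function.invFunOn T I) (T '' I) I := fun _ hs => Function.invFunOn_mem hs
  refine (isSolODE_transformedCoeff_iff hI hinj (hX₁.inv hX₁') (fun t ht => inv_ne_zero (hX₁' t ht))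
    hT hT' ((hX₁.comp hG hGI).mul (hv.1.comp hG hGI)) fun t ht => ?_).2 hv
  simp only [Function.comp_apply, hinj.leftInvOn_invFunOn ht, Pi.inv_apply,
    inv_mul_cancel_left₀ (hX₁' t ht)]

theorem IsSolODE.of_transformed {X₁ : ℝ → ℝ} (hI : IsOpen I) (hinj : InjOn T I)
    (hX₁ : ContDiffOn ℝ (⊤ : ℕ∞) X₁ I) (hX₁' : ∀ t ∈ I, X₁ t ≠ 0)
    (hT : ContDiffOn ℝ (⊤ : ℕ∞) T I) (hT' : ∀ t ∈ I, deriv T t ≠ 0)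
    (hy : IsSolODE r (transformedCoeff (fun t => (X₁ t)⁻¹) T I r a) (fun _ => 0) (T '' I) y) :
    IsSolODE r a (fun _ => 0) I (fun t => y (T t) / X₁ t) :=
  (isSolODE_transformedCoeff_iff hI hinj (hX₁.inv hX₁') (fun t ht => inv_ne_zero (hX₁' t ht))
    hT hT' hy.1 fun _ _ => div_eq_inv_mul _ _).1 hy

end transform

theorem stmt6_general (r : ℕ) (I : Set ℝ) (hI : IsOpenInterval I)
    (a : ℕ → ℝ → ℝ) (ha : ∀ i, ContDiffOn ℝ (⊤ : ℕ∞) (a i) I)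
    (T X₁ X₀ : ℝ → ℝ)
    (hT : ContDiffOn ℝ (⊤ : ℕ∞) T I) (hX₁ : ContDiffOn ℝ (⊤ : ℕ∞) X₁ I)
    (hTX : ∀ t ∈ I, deriv T t * X₁ t ≠ 0) :
    (∃ a' : ℕ → ℝ → ℝ, (∀ i, ContDiffOn ℝ (⊤ : ℕ∞) (a' i) (T '' I)) ∧
      FPMapsODE r I a (fun _ => 0) a' (fun _ => 0) T X₁ X₀ ∧
      (∀ y : ℝ → ℝ, IsSolODE r a' (fun _ => 0) (T '' I) y →
        IsSolODE r a (fun _ => 0) I (fun t => (y (T t) - X₀ t) / X₁ t)))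
    ↔ IsSolODE r a (fun _ => 0) I (fun t => X₀ t / X₁ t) := by
  obtain ⟨hIo, hIc, -⟩ := hI
  have hT' : ∀ t ∈ I, deriv T t ≠ 0 := fun t ht => left_ne_zero_of_mul (hTX t ht)
  have hX₁' : ∀ t ∈ I, X₁ t ≠ 0 := fun t ht => right_ne_zero_of_mul (hTX t ht)
  have hinj : InjOn T I := .of_deriv_ne_zero hIo hIc (hT.differentiableOn (by simp)) hT'
  constructor
  · rintro ⟨a', -, -, hinv⟩
    convert isSolODE_zero.sub hIo (hinv _ isSolODE_zero) using 2
    ring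
  · intro hsol
    refine ⟨_, fun k => (hX₁.inv hX₁').transformedCoeff hIo hinj
      (fun t ht => inv_ne_zero (hX₁' t ht)) hT hT' ha k, fun x hx => ⟨_,
        (hx.add hIo hsol).transformed hIo hinj hX₁ hX₁' hT hT', fun t ht => ?_⟩, fun y hy => ?_⟩
    · simp only [hinj.leftInvOn_invFunOn ht]
      field_simp [hX₁' t ht]
    · convert (hy.of_transformed hIo hinj hX₁ hX₁' hT hT').sub hIo hsol using 2
      ring

/-- for `r ≥ 3` and a homogeneous `r`-th order linear ODE `E` on `I`,
a fiber-preserving transformation `t̃ = T(t)`, `x̃ = X₁(t)x + X₀(t)` with `T' X₁ ≠ 0`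
maps `E` to some homogeneous `r`-th order linear ODE on `T(I)` (with inverse mapping
back) if and only if `X₀/X₁` is a solution of `E`. -/
theorem stmt6 (r : ℕ) (hr : 3 ≤ r) (I : Set ℝ) (hI : IsOpenInterval I)
    (a : ℕ → ℝ → ℝ) (ha : ∀ i, ContDiffOn ℝ (⊤ : ℕ∞) (a i) I)
    (T X₁ X₀ : ℝ → ℝ)
    (hT : ContDiffOn ℝ (⊤ : ℕ∞) T I) (hX₁ : ContDiffOn ℝ (⊤ : ℕ∞) X₁ I) (hX₀ : ContDiffOn ℝ (⊤ : ℕ∞) X₀ I)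
    (hTX : ∀ t ∈ I, deriv T t * X₁ t ≠ 0) :
    (∃ a' : ℕ → ℝ → ℝ, (∀ i, ContDiffOn ℝ (⊤ : ℕ∞) (a' i) (T '' I)) ∧
      FPMapsODE r I a (fun _ => 0) a' (fun _ => 0) T X₁ X₀ ∧
      (∀ y : ℝ → ℝ, IsSolODE r a' (fun _ => 0) (T '' I) y →
        IsSolODE r a (fun _ => 0) I (fun t => (y (T t) - X₀ t) / X₁ t)))
    ↔ IsSolODE r a (fun _ => 0) I (fun t => X₀ t / X₁ t) :=
  stmt6_general r I hI a ha T X₁ X₀ hT hX₁ hTX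
end

section
/- Let r ≥ 3 and let c₀, …, c_{r−3} be real constants. Then there exist real constants d₀, …, d_{r−3}, depending only on r and c₀, …, c_{r−3}, such that for every solution x : (0, ∞) → ℝ of the Euler-type equation x^{(r)}(t) + c_{r−3}t^{−3}x^{(r−3)}(t) + ⋯ + c₁t^{−r+1}x'(t) + c₀t^{−r}x(t) = 0, the function y : ℝ → ℝ defined by y(s) = e^{−(r−1)s/2}·x(e^{s}) satisfies the constant-coefficient equation y^{(r)}(s) − (r(r²−1)/24)·y^{(r−2)}(s) + d_{r−3}y^{(r−3)}(s) + ⋯ + d₁y'(s) + d₀y(s) = 0 for all s ∈ ℝ. (The point transformation t̃ = ln t, x̃ = x·t^{−(r−1)/2} maps the Euler–Cauchy equation in Laguerre–Forsyth form to a constant-coefficient equation in rational form with a_{r−2} = −r(r²−1)/24.) -/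
/-!
Put `D = d/ds`. For `y(s) = e^{ls} x(e^s)`, differentiating and inducting on `k` gives
`e^{(l+k)s} x^{(k)}(e^s) = (∏_{j<k} (D - l - j)) y (s)`. Multiplying the Euler equation at
`t = e^s` by `e^{(l+r)s}` therefore turns it into `Q(D) y = 0`, where
`Q = ∏_{j<r} (X - l - j) + ∑_{i<r-2} cᵢ ∏_{j<i} (X - l - j)`. The lower terms have degree
`< r - 2`, so the coefficients of `X^{r-1}` and `X^{r-2}` in `Q` are, up to sign, the first two
elementary symmetric functions of `l, …, l + r - 1`. For `l = -(r-1)/2` these roots are symmetric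
about `0`: the first vanishes and the second is `-½ ∑ⱼ (j - (r-1)/2)² = -r(r²-1)/24`.
-/
open Set

open Polynomial Real
open scoped ContDiff

noncomputable def shiftedDescPochhammer (l : ℝ) (k : ℕ) : ℝ[X] :=
  ∏ j ∈ Finset.range k, (X - C (l + j))

namespace shiftedDescPochhammer

lemma succ (l : ℝ) (k : ℕ) :
    shiftedDescPochhammer l (k + 1) = shiftedDescPochhammer l k * (X - C (l + k)) :=
  Finset.prod_range_succ _ k

lemma monic (l : ℝ) (k : ℕ) : (shiftedDescPochhammer l k).Monic :=
  monic_prod_of_monic _ _ fun _ _ => monic_X_sub_C _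

lemma natDegree_eq (l : ℝ) (k : ℕ) : (shiftedDescPochhammer l k).natDegree = k := by
  rw [shiftedDescPochhammer, natDegree_prod_of_monic _ _ fun _ _ => monic_X_sub_C _]
  simp only [natDegree_X_sub_C, Finset.sum_const, Finset.card_range, smul_eq_mul, mul_one]

lemma coeff_self (l : ℝ) (k : ℕ) : (shiftedDescPochhammer l k).coeff k = 1 := by
  simpa [natDegree_eq] using (monic l k).coeff_natDegree

lemma coeff_pred (l : ℝ) (k : ℕ) :
    (shiftedDescPochhammer l (k + 1)).coeff k = -((k + 1) * l + k * (k + 1) / 2) := by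
  induction k with
  | zero => simp [shiftedDescPochhammer]
  | succ k ih =>
    rw [succ, coeff_mul_X_sub_C, ih, coeff_self]
    push_cast
    ring

lemma coeff_pred_pred (l : ℝ) (k : ℕ) :
    (shiftedDescPochhammer l (k + 2)).coeff k =
      (k + 1) * (k + 2) / 2 * l ^ 2 + (k + 1) ^ 2 * (k + 2) / 2 * l
        + k * (k + 1) * (k + 2) * (3 * k + 5) / 24 := by
  induction k with
  | zero => simp [shiftedDescPochhammer, Finset.prod_range_succ, coeff_zero_eq_eval_zero]; ring
  | succ k ih =>
    rw [succ, coeff_mul_X_sub_C, ih, coeff_pred]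
    push_cast
    ring

end shiftedDescPochhammer

/-- `applyDiffOp y s p` is `(p(D) y)(s)`, with `D = d/ds`. -/
noncomputable def applyDiffOp (y : ℝ → ℝ) (s : ℝ) : ℝ[X] →ₗ[ℝ] ℝ :=
  lsum fun j => LinearMap.id.smulRight (iteratedDeriv j y s)

section applyDiffOp

variable {y : ℝ → ℝ} {s : ℝ}

lemma applyDiffOp_apply (p : ℝ[X]) :
    applyDiffOp y s p = p.sum fun j a => a * iteratedDeriv j y s := by
  simp [applyDiffOp, lsum_apply]

lemma applyDiffOp_monomial (n : ℕ) (a : ℝ) :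
    applyDiffOp y s (monomial n a) = a * iteratedDeriv n y s := by
  rw [applyDiffOp_apply]
  exact sum_monomial_index (f := fun j a => a * iteratedDeriv j y s) _ (zero_mul _)

lemma applyDiffOp_one : applyDiffOp y s 1 = y s := by
  simpa using applyDiffOp_monomial (y := y) (s := s) 0 1

lemma applyDiffOp_eq_sum_range {p : ℝ[X]} {N : ℕ} (hp : p.natDegree < N) :
    applyDiffOp y s p = ∑ i ∈ Finset.range N, p.coeff i * iteratedDeriv i y s := by
  rw [applyDiffOp_apply]
  exact sum_over_range' (f := fun j a => a * iteratedDeriv j y s) _ (fun _ => zero_mul _) N hp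

lemma hasDerivAt_applyDiffOp (hy : ContDiff ℝ ∞ y) (p : ℝ[X]) :
    HasDerivAt (fun s => applyDiffOp y s p) (applyDiffOp y s (p * X)) s := by
  induction p using Polynomial.induction_on' with
  | add p q hp hq =>
    simp only [map_add, add_mul]
    exact hp.fun_add hq
  | monomial n a =>
    simp only [applyDiffOp_monomial, monomial_mul_X]
    rw [iteratedDeriv_succ]
    have hdiff := hy.differentiable_iteratedDeriv n (by exact_mod_cast ENat.natCast_lt_top n)
    exact (hdiff s).hasDerivAt.const_mul a

end applyDiffOp

lemma ContDiffOn.hasDerivAt_iteratedDeriv {𝕜 F : Type*} [NontriviallyNormedField 𝕜]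
    [NormedAddCommGroup F] [NormedSpace 𝕜 F] {x : 𝕜 → F} {U : Set 𝕜} (hx : ContDiffOn 𝕜 ∞ x U)
    (hU : IsOpen U) (k : ℕ) {t : 𝕜} (ht : t ∈ U) :
    HasDerivAt (iteratedDeriv k x) (iteratedDeriv (k + 1) x t) t := by
  rw [iteratedDeriv_succ]
  refine (((hx.differentiableOn_iteratedDerivWithin ?_ hU.uniqueDiffOn).congr
    (iteratedDerivWithin_of_isOpen hU).symm).differentiableAt (hU.mem_nhds ht)).hasDerivAt
  exact_mod_cast ENat.natCast_lt_top k

lemma exp_mul_iteratedDeriv_comp_exp {l : ℝ} {x y : ℝ → ℝ} (hx : ContDiffOn ℝ ∞ x (Ioi 0))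
    (hy : ∀ s, y s = exp (l * s) * x (exp s)) (k : ℕ) (s : ℝ) :
    exp ((l + k) * s) * iteratedDeriv k x (exp s) =
      applyDiffOp y s (shiftedDescPochhammer l k) := by
  have hy_smooth : ContDiff ℝ ∞ y := by
    rw [funext hy]
    exact (contDiff_const.mul contDiff_id).exp.mul (hx.comp_contDiff contDiff_exp exp_pos)
  induction k generalizing s with
  | zero => simp [shiftedDescPochhammer, applyDiffOp_one, hy]
  | succ k ih =>
    have hF : HasDerivAt (fun s => exp ((l + k) * s) * iteratedDeriv k x (exp s))
        ((l + k) * (exp ((l + k) * s) * iteratedDeriv k x (exp s))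
          + exp ((l + (k + 1 : ℕ)) * s) * iteratedDeriv (k + 1) x (exp s)) s := by
      have h := (((hasDerivAt_id s).const_mul (l + k)).exp).mul
        ((hx.hasDerivAt_iteratedDeriv isOpen_Ioi k (exp_pos s)).comp s (hasDerivAt_exp s))
      refine h.congr_deriv ?_
      rw [show (l + (k + 1 : ℕ)) * s = (l + k) * s + s by push_cast; ring, exp_add]
      simp only [Function.comp_apply, id]
      ring
    have hP : HasDerivAt (fun s => exp ((l + k) * s) * iteratedDeriv k x (exp s))
        (applyDiffOp y s (shiftedDescPochhammer l k * X)) s := by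
      simpa only [ih] using hasDerivAt_applyDiffOp hy_smooth (shiftedDescPochhammer l k)
    rw [shiftedDescPochhammer.succ, mul_sub, mul_comm _ (C _), ← smul_eq_C_mul, map_sub,
      map_smul, ← ih, hP.unique hF, smul_eq_mul]
    ring

noncomputable def eulerCauchyPoly (l : ℝ) (r m : ℕ) (c : ℕ → ℝ) : ℝ[X] :=
  shiftedDescPochhammer l r + ∑ i ∈ Finset.range m, C (c i) * shiftedDescPochhammer l i

section eulerCauchyPoly

variable {l : ℝ} {r m : ℕ} {c : ℕ → ℝ}

lemma natDegree_eulerCauchyPoly_le (hm : m ≤ r) : (eulerCauchyPoly l r m c).natDegree ≤ r := by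
  refine natDegree_add_le_of_degree_le (shiftedDescPochhammer.natDegree_eq l r).le
    (natDegree_sum_le_of_forall_le _ _ fun i hi => ?_)
  refine (natDegree_C_mul_le _ _).trans ?_
  rw [shiftedDescPochhammer.natDegree_eq]
  exact ((Finset.mem_range.1 hi).trans_le hm).le

lemma coeff_eulerCauchyPoly_of_le {j : ℕ} (hj : m ≤ j) :
    (eulerCauchyPoly l r m c).coeff j = (shiftedDescPochhammer l r).coeff j := by
  rw [eulerCauchyPoly, coeff_add, finsetSum_coeff, add_eq_left]
  refine Finset.sum_eq_zero fun i hi => ?_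
  rw [coeff_C_mul, coeff_eq_zero_of_natDegree_lt, mul_zero]
  rw [shiftedDescPochhammer.natDegree_eq]
  exact (Finset.mem_range.1 hi).trans_le hj

end eulerCauchyPoly

lemma applyDiffOp_eulerCauchyPoly_eq_zero {l : ℝ} {r m : ℕ} {c : ℕ → ℝ} {x y : ℝ → ℝ}
    (hx : ContDiffOn ℝ ∞ x (Ioi 0)) (hy : ∀ s, y s = exp (l * s) * x (exp s)) (hm : m ≤ r)
    (hode : ∀ t ∈ Ioi (0 : ℝ), iteratedDeriv r x t
      + ∑ i ∈ Finset.range m, c i / t ^ (r - i) * iteratedDeriv i x t = 0) (s : ℝ) :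
    applyDiffOp y s (eulerCauchyPoly l r m c) = 0 := by
  have hterm : ∀ i ∈ Finset.range m, exp ((l + r) * s) * (c i / exp s ^ (r - i) *
      iteratedDeriv i x (exp s)) = applyDiffOp y s (C (c i) * shiftedDescPochhammer l i) := by
    intro i hi
    have hir : i ≤ r := ((Finset.mem_range.1 hi).trans_le hm).le
    rw [← smul_eq_C_mul, map_smul, ← exp_mul_iteratedDeriv_comp_exp hx hy, smul_eq_mul,
      ← exp_nat_mul, show (l + r) * s = (l + i) * s + ((r - i : ℕ) : ℝ) * s by
        push_cast [hir]; ring, exp_add]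
    field_simp
  calc applyDiffOp y s (eulerCauchyPoly l r m c)
      = exp ((l + r) * s) * (iteratedDeriv r x (exp s)
          + ∑ i ∈ Finset.range m, c i / exp s ^ (r - i) * iteratedDeriv i x (exp s)) := by
        rw [mul_add, Finset.mul_sum, Finset.sum_congr rfl hterm, eulerCauchyPoly, map_add,
          map_sum, exp_mul_iteratedDeriv_comp_exp hx hy]
    _ = 0 := by rw [hode _ (exp_pos s), mul_zero]

lemma applyDiffOp_eulerCauchyPoly_centered (n : ℕ) (c : ℕ → ℝ) (y : ℝ → ℝ) (s : ℝ) :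
    applyDiffOp y s (eulerCauchyPoly (-(n + 1) / 2) (n + 2) n c) =
      iteratedDeriv (n + 2) y s - (n + 2) * ((n + 2) ^ 2 - 1) / 24 * iteratedDeriv n y s
        + ∑ i ∈ Finset.range n, (eulerCauchyPoly (-(n + 1) / 2) (n + 2) n c).coeff i
          * iteratedDeriv i y s := by
  rw [applyDiffOp_eq_sum_range (Nat.lt_succ_of_le (natDegree_eulerCauchyPoly_le (by omega))),
    Finset.sum_range_succ, Finset.sum_range_succ, Finset.sum_range_succ,
    coeff_eulerCauchyPoly_of_le le_rfl, coeff_eulerCauchyPoly_of_le (by omega),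
    coeff_eulerCauchyPoly_of_le (by omega), shiftedDescPochhammer.coeff_self,
    shiftedDescPochhammer.coeff_pred, shiftedDescPochhammer.coeff_pred_pred]
  push_cast
  ring

/-- the point transformation `t̃ = ln t`, `x̃ = x·t^(−(r−1)/2)` maps the
Euler–Cauchy equation `x^(r) + ∑_{i≤r−3} cᵢ t^(−(r−i)) x^(i) = 0` on `(0, ∞)` to a
constant-coefficient equation `y^(r) − (r(r²−1)/24) y^(r−2) + ∑_{i≤r−3} dᵢ y^(i) = 0`
on `ℝ`, for suitable constants `d` depending only on `r` and `c`. -/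
theorem stmt16 (r : ℕ) (hr : 3 ≤ r) (c : ℕ → ℝ) :
    ∃ d : ℕ → ℝ, ∀ x : ℝ → ℝ,
      ContDiffOn ℝ (⊤ : ℕ∞) x (Ioi 0) →
      (∀ t ∈ Ioi (0 : ℝ), iteratedDeriv r x t
        + ∑ i ∈ Finset.range (r - 2), c i / t ^ (r - i) * iteratedDeriv i x t = 0) →
      ∀ y : ℝ → ℝ,
        (∀ s : ℝ, y s = Real.exp (-(((r : ℝ) - 1) * s / 2)) * x (Real.exp s)) →
        ∀ s : ℝ, iteratedDeriv r y s
          - (r : ℝ) * ((r : ℝ) ^ 2 - 1) / 24 * iteratedDeriv (r - 2) y s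
          + ∑ i ∈ Finset.range (r - 2), d i * iteratedDeriv i y s = 0 := by
  obtain ⟨n, rfl⟩ : ∃ n, r = n + 2 := ⟨r - 2, by omega⟩
  refine ⟨fun i => (eulerCauchyPoly (-(n + 1) / 2) (n + 2) n c).coeff i, ?_⟩
  intro x hx hode y hy s
  have hy' : ∀ s, y s = exp (-(n + 1) / 2 * s) * x (exp s) := fun s => by
    rw [hy s]; push_cast; ring_nf
  simp only [Nat.add_sub_cancel] at hode ⊢
  have h := applyDiffOp_eulerCauchyPoly_eq_zero hx hy' (by omega) hode s
  rw [applyDiffOp_eulerCauchyPoly_centered] at h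
  push_cast
  exact h
end
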